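/- arXiv:2605.09953 — 5 statements merged into one kernel-verified Lean document; each statement's English description precedes it below -/
import Mathlib

section
/- Domino k-bFDR control: Suppose for every subset S ⊆ [m] with |S| ≥ k there is a {0,1}-valued test φ_S with P(φ_{H0} = 1) ≤ α whenever |H0| ≥ k. Let R be a random rejection set such that on the event {|R| ≥ k}, the marginal set M_k(R) (a k-element subset of R) satisfies: φ_S = 1 for every S ⊇ M_k(R). Then P(M_k(R) ⊆ H0) ≤ α, i.e., k-bFDR(R) ≤ α. -/
open MeasureTheory Finset

/-! On the event `M ⊆ H0` the domino condition, applied to `S = H0`, forces `φ H0 = true`;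
and this event can only occur when `k ≤ H0.card`, because `M` has `k` elements. Validity of
the test `φ H0` then bounds its probability. -/

section Domino

variable {ι Ω : Type*} (φ : Finset ι → Ω → Bool) (R M : Ω → Finset ι) (k : ℕ) (H0 : Finset ι)

theorem setOf_marginal_subset_subset_setOf_test
    (hdomino : ∀ ω, k ≤ (R ω).card → ∀ S, M ω ⊆ S → φ S ω = true) :
    {ω | k ≤ (R ω).card ∧ M ω ⊆ H0} ⊆ {ω | φ H0 ω = true} :=
  fun ω hω => hdomino ω hω.1 H0 hω.2

variable {R M k H0} in
theorem le_card_of_mem_setOf_marginal_subset (hcard : ∀ ω, k ≤ (R ω).card → (M ω).card = k)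
    {ω : Ω} (hω : ω ∈ {ω | k ≤ (R ω).card ∧ M ω ⊆ H0}) : k ≤ H0.card :=
  hcard ω hω.1 ▸ card_le_card hω.2

end Domino

theorem stmt5_general {Ω : Type*} [MeasurableSpace Ω] (μ : Measure Ω)
    (m k : ℕ) (H0 : Finset (Fin m)) (φ : Finset (Fin m) → Ω → Bool)
    (R M : Ω → Finset (Fin m)) (α : ℝ)
    (hvalid : k ≤ H0.card → μ {ω | φ H0 ω = true} ≤ ENNReal.ofReal α)
    (hM : ∀ ω, k ≤ (R ω).card →
      M ω ⊆ R ω ∧ (M ω).card = k ∧ ∀ S : Finset (Fin m), M ω ⊆ S → φ S ω = true) :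
    μ {ω | k ≤ (R ω).card ∧ M ω ⊆ H0} ≤ ENNReal.ofReal α := by
  obtain hempty | ⟨ω, hω⟩ := Set.eq_empty_or_nonempty {ω | k ≤ (R ω).card ∧ M ω ⊆ H0}
  · simp [hempty]
  · have hH0 : k ≤ H0.card :=
      le_card_of_mem_setOf_marginal_subset (fun ω h => (hM ω h).2.1) hω
    calc μ {ω | k ≤ (R ω).card ∧ M ω ⊆ H0} ≤ μ {ω | φ H0 ω = true} :=
          measure_mono (setOf_marginal_subset_subset_setOf_test φ R M k H0
            fun ω h => (hM ω h).2.2)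
      _ ≤ ENNReal.ofReal α := hvalid hH0

/-- Domino k-bFDR control: if the k-local tests are valid at level α (in particular for
S = H0 when |H0| ≥ k), and pointwise on {|R| ≥ k} the marginal set M_k(R) is a
k-element subset of R with φ_S = 1 for every S ⊇ M_k(R), then
k-bFDR(R) = P(|R| ≥ k and M_k(R) ⊆ H0) ≤ α. -/
theorem stmt5 {Ω : Type*} [MeasurableSpace Ω] (μ : Measure Ω) [IsProbabilityMeasure μ]
    (m k : ℕ) (H0 : Finset (Fin m)) (φ : Finset (Fin m) → Ω → Bool)
    (R M : Ω → Finset (Fin m)) (α : ℝ)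
    (hvalid : k ≤ H0.card → μ {ω | φ H0 ω = true} ≤ ENNReal.ofReal α)
    (hM : ∀ ω, k ≤ (R ω).card →
      M ω ⊆ R ω ∧ (M ω).card = k ∧ ∀ S : Finset (Fin m), M ω ⊆ S → φ S ω = true) :
    μ {ω | k ≤ (R ω).card ∧ M ω ⊆ H0} ≤ ENNReal.ofReal α :=
  stmt5_general μ m k H0 φ R M α hvalid hM
end

section
/- Harmonic mean validity for two p-values: if p_1, p_2 are random variables in (0,1] each satisfying P(p_j ≤ u) ≤ u for all u ∈ [0,1], then for any α ∈ (0,1], P( 2 · 2/(1/p_1 + 1/p_2) ≤ α ) ≤ α, i.e., twice the harmonic mean bounded by α has probability at most α. -/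
open MeasureTheory

/-- Harmonic mean validity for two p-values under arbitrary dependence:
P(2 · (2/(1/p₁ + 1/p₂)) ≤ α) ≤ α. -/
theorem stmt8 {Ω : Type*} [MeasurableSpace Ω] (μ : Measure Ω) [IsProbabilityMeasure μ]
    (p₁ p₂ : Ω → ℝ)
    (hmeas₁ : Measurable p₁) (hmeas₂ : Measurable p₂)
    (hrange₁ : ∀ ω, p₁ ω ∈ Set.Ioc (0:ℝ) 1) (hrange₂ : ∀ ω, p₂ ω ∈ Set.Ioc (0:ℝ) 1)
    (hsuper₁ : ∀ u ∈ Set.Icc (0:ℝ) 1, μ {ω | p₁ ω ≤ u} ≤ ENNReal.ofReal u)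
    (hsuper₂ : ∀ u ∈ Set.Icc (0:ℝ) 1, μ {ω | p₂ ω ≤ u} ≤ ENNReal.ofReal u)
    (α : ℝ) (hα : 0 < α) (hα1 : α ≤ 1) :
    μ {ω | 2 * (2 / (1/p₁ ω + 1/p₂ ω)) ≤ α} ≤ ENNReal.ofReal α := by
  have hsub : {ω | 2 * (2 / (1/p₁ ω + 1/p₂ ω)) ≤ α} ⊆
      {ω | p₁ ω ≤ α/2} ∪ {ω | p₂ ω ≤ α/2} := by
    intro ω hω
    simp only [Set.mem_setOf_eq] at hω
    have h1 := (hrange₁ ω).1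
    have h2 := (hrange₂ ω).1
    have hsum : 0 < 1/p₁ ω + 1/p₂ ω := by positivity
    -- from hω : 4 / s ≤ α with s > 0, get s ≥ 4/α
    have hs : 4 / α ≤ 1/p₁ ω + 1/p₂ ω := by
      rw [div_le_iff₀ hα]
      have h4 : 4 / (1/p₁ ω + 1/p₂ ω) ≤ α := by
        calc 4 / (1/p₁ ω + 1/p₂ ω) = 2 * (2 / (1/p₁ ω + 1/p₂ ω)) := by ring
          _ ≤ α := hω
      rw [div_le_iff₀ hsum] at h4
      nlinarith
    by_contra hc
    simp only [Set.mem_union, Set.mem_setOf_eq, not_or, not_le] at hc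
    obtain ⟨hc1, hc2⟩ := hc
    have hi1 : 1/p₁ ω < 2/α := by
      rw [div_lt_div_iff₀ h1 hα]; nlinarith
    have hi2 : 1/p₂ ω < 2/α := by
      rw [div_lt_div_iff₀ h2 hα]; nlinarith
    have : 1/p₁ ω + 1/p₂ ω < 4/α := by
      have : (2:ℝ)/α + 2/α = 4/α := by ring
      linarith
    linarith
  have hhalf : α/2 ∈ Set.Icc (0:ℝ) 1 := ⟨by linarith, by linarith⟩
  calc μ {ω | 2 * (2 / (1/p₁ ω + 1/p₂ ω)) ≤ α}
      ≤ μ ({ω | p₁ ω ≤ α/2} ∪ {ω | p₂ ω ≤ α/2}) := measure_mono hsub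
    _ ≤ μ {ω | p₁ ω ≤ α/2} + μ {ω | p₂ ω ≤ α/2} := measure_union_le _ _
    _ ≤ ENNReal.ofReal (α/2) + ENNReal.ofReal (α/2) :=
        add_le_add (hsuper₁ _ hhalf) (hsuper₂ _ hhalf)
    _ = ENNReal.ofReal α := by
        rw [← ENNReal.ofReal_add (by linarith) (by linarith)]; norm_num
end

section
/- e-closure k-FWER control: let e_S (S ⊆ [m]) be nonnegative random variables with E[e_{H0}] ≤ 1 for the true-null set H0. If a random rejection set R satisfies pointwise e_S ≥ 1{|S ∩ R| ≥ k}/α for all S ⊆ [m], then P(|H0 ∩ R| ≥ k) ≤ α. -/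
open MeasureTheory Finset

section Markov

variable {Ω : Type*} [MeasurableSpace Ω] {μ : Measure Ω} [IsFiniteMeasure μ]

theorem measure_le_ofReal_mul_integral_of_indicator_div_le {A : Set Ω} {f : Ω → ℝ} {α : ℝ}
    (hα : 0 < α) (hf : Integrable f μ) (hAf : ∀ ω, A.indicator 1 ω / α ≤ f ω) :
    μ A ≤ ENNReal.ofReal (α * ∫ ω, f ω ∂μ) := by
  have hf_nonneg : 0 ≤ f := fun ω =>
    le_trans (div_nonneg (Set.indicator_nonneg (fun _ _ => zero_le_one) ω) hα.le) (hAf ω)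
  have hA_sub : A ⊆ {ω | α⁻¹ ≤ f ω} := fun ω hω => by
    simpa [Set.indicator_of_mem hω] using hAf ω
  have hmarkov : α⁻¹ * μ.real {ω | α⁻¹ ≤ f ω} ≤ ∫ ω, f ω ∂μ :=
    mul_meas_ge_le_integral_of_nonneg (ae_of_all _ hf_nonneg) hf α⁻¹
  calc μ A ≤ μ {ω | α⁻¹ ≤ f ω} := measure_mono hA_sub
    _ = ENNReal.ofReal (μ.real {ω | α⁻¹ ≤ f ω}) := (ofReal_measureReal (measure_ne_top _ _)).symm
    _ ≤ ENNReal.ofReal (α * ∫ ω, f ω ∂μ) := by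
      gcongr
      rwa [inv_mul_le_iff₀ hα] at hmarkov

end Markov

theorem stmt14_general {Ω : Type*} [MeasurableSpace Ω] (μ : Measure Ω) [IsProbabilityMeasure μ]
    (m k : ℕ) (H0 : Finset (Fin m)) (e : Finset (Fin m) → Ω → ℝ)
    (R : Ω → Finset (Fin m)) (α : ℝ) (hα : 0 < α)
    (hint : Integrable (e H0) μ)
    (hE : ∫ ω, e H0 ω ∂μ ≤ 1)
    (hcond : ∀ ω, ∀ S : Finset (Fin m),
      (if k ≤ (S ∩ R ω).card then (1:ℝ) else 0)/α ≤ e S ω) :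
    μ {ω | k ≤ (H0 ∩ R ω).card} ≤ ENNReal.ofReal α := by
  have hH0 : ∀ ω, {ω | k ≤ (H0 ∩ R ω).card}.indicator 1 ω / α ≤ e H0 ω := fun ω => by
    simpa only [Set.indicator_apply, Set.mem_ofPred_eq, Pi.one_apply] using hcond ω H0
  calc μ {ω | k ≤ (H0 ∩ R ω).card} ≤ ENNReal.ofReal (α * ∫ ω, e H0 ω ∂μ) :=
        measure_le_ofReal_mul_integral_of_indicator_div_le hα hint hH0
    _ ≤ ENNReal.ofReal α := by
      gcongr
      exact mul_le_of_le_one_right hα.le hE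

/-- e-closure k-FWER control: if E[e_{H0}] ≤ 1 and pointwise
e_S ≥ 1{|S ∩ R| ≥ k}/α for all S, then P(|H0 ∩ R| ≥ k) ≤ α. -/
theorem stmt14 {Ω : Type*} [MeasurableSpace Ω] (μ : Measure Ω) [IsProbabilityMeasure μ]
    (m k : ℕ) (H0 : Finset (Fin m)) (e : Finset (Fin m) → Ω → ℝ)
    (R : Ω → Finset (Fin m)) (α : ℝ) (hα : 0 < α) (hα1 : α ≤ 1)
    (hnonneg : ∀ S ω, 0 ≤ e S ω)
    (hint : Integrable (e H0) μ)
    (hE : ∫ ω, e H0 ω ∂μ ≤ 1)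
    (hmeas : MeasurableSet {ω | k ≤ (H0 ∩ R ω).card})
    (hcond : ∀ ω, ∀ S : Finset (Fin m),
      (if k ≤ (S ∩ R ω).card then (1:ℝ) else 0)/α ≤ e S ω) :
    μ {ω | k ≤ (H0 ∩ R ω).card} ≤ ENNReal.ofReal α :=
  stmt14_general μ m k H0 e R α hα hint hE hcond
end

section
/- e-closure bFDR control: let e_S (nonempty S ⊆ [m]) be nonnegative random variables with E[e_{H0}] ≤ 1 when H0 ≠ ∅. If a random nonempty rejection set R with least-significant index I(R) satisfies pointwise e_S ≥ 1/α for all S ∋ I(R), then P(I(R) ∈ H0) ≤ α. -/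
open MeasureTheory Finset

/-! On the event `I(R) ∈ H₀` the rejection set is nonempty (as `I(∅) = 0 ∉ H₀`), so taking
`S = H₀` in the e-closure condition gives `e_{H₀} ≥ 1/α` there. Markov's inequality for the
e-variable `e_{H₀}` then bounds the probability of that event by `α`. -/

theorem measure_one_div_le_le_ofReal_of_integral_le_one {Ω : Type*} [MeasurableSpace Ω]
    {μ : Measure Ω} [IsFiniteMeasure μ] {X : Ω → ℝ} (hX : 0 ≤ᵐ[μ] X) (hXint : Integrable X μ)
    (hX1 : ∫ ω, X ω ∂μ ≤ 1) {α : ℝ} (hα : 0 < α) :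
    μ {ω | 1 / α ≤ X ω} ≤ ENNReal.ofReal α := by
  rw [← ofReal_measureReal]
  refine ENNReal.ofReal_le_ofReal ?_
  have hMarkov := (mul_meas_ge_le_integral_of_nonneg hX hXint (1 / α)).trans hX1
  rwa [one_div_mul_eq_div, div_le_one hα] at hMarkov

theorem stmt15_general {Ω : Type*} [MeasurableSpace Ω] (μ : Measure Ω) [IsProbabilityMeasure μ]
    (H0 : Finset ℕ) (h0 : 0 ∉ H0)
    (e : Finset ℕ → Ω → ℝ) (R : Ω → Finset ℕ) (I : Ω → ℕ)
    (α : ℝ) (hα : 0 < α)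
    (hnonneg : ∀ S ω, 0 ≤ e S ω)
    (hint : H0.Nonempty → Integrable (e H0) μ)
    (hE : H0.Nonempty → ∫ ω, e H0 ω ∂μ ≤ 1)
    (hIempty : ∀ ω, R ω = ∅ → I ω = 0)
    (hcond : ∀ ω, (R ω).Nonempty → ∀ S : Finset ℕ, I ω ∈ S → 1/α ≤ e S ω) :
    μ {ω | I ω ∈ H0} ≤ ENNReal.ofReal α := by
  rcases H0.eq_empty_or_nonempty with rfl | hH0
  · simp
  have hsub : {ω | I ω ∈ H0} ⊆ {ω | 1 / α ≤ e H0 ω} := fun ω hI ↦ by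
    have hR : (R ω).Nonempty :=
      nonempty_iff_ne_empty.2 fun hR ↦ h0 (hIempty ω hR ▸ hI)
    exact hcond ω hR H0 hI
  exact (measure_mono hsub).trans <| measure_one_div_le_le_ofReal_of_integral_le_one
    (Filter.Eventually.of_forall (hnonneg H0)) (hint hH0) (hE hH0) hα

/-- e-closure bFDR control: if E[e_{H0}] ≤ 1 when H0 ≠ ∅, and on {R ≠ ∅} pointwise
e_S ≥ 1/α for all S containing the least significant rejected index I(R)
(with I(∅) = 0 ∉ H0), then P(I(R) ∈ H0) ≤ α. -/
theorem stmt15 {Ω : Type*} [MeasurableSpace Ω] (μ : Measure Ω) [IsProbabilityMeasure μ]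
    (m : ℕ) (H0 : Finset ℕ) (hH0sub : H0 ⊆ Finset.Icc 1 m) (h0 : 0 ∉ H0)
    (e : Finset ℕ → Ω → ℝ) (R : Ω → Finset ℕ) (I : Ω → ℕ)
    (α : ℝ) (hα : 0 < α) (hα1 : α ≤ 1)
    (hnonneg : ∀ S ω, 0 ≤ e S ω)
    (hint : H0.Nonempty → Integrable (e H0) μ)
    (hE : H0.Nonempty → ∫ ω, e H0 ω ∂μ ≤ 1)
    (hmeas : MeasurableSet {ω | I ω ∈ H0})
    (hIin : ∀ ω, (R ω).Nonempty → I ω ∈ R ω)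
    (hIempty : ∀ ω, R ω = ∅ → I ω = 0)
    (hcond : ∀ ω, (R ω).Nonempty → ∀ S : Finset ℕ, I ω ∈ S → 1/α ≤ e S ω) :
    μ {ω | I ω ∈ H0} ≤ ENNReal.ofReal α :=
  stmt15_general μ H0 h0 e R I α hα hnonneg hint hE hIempty hcond
end

section
/- If the rejection set R consists of the r smallest p-values (r ≥ k) and no non-consecutive variant helps: for sorted p-values p_{π(1)} ≤ ... ≤ p_{π(m)} and the generalized Bonferroni test, if the rank-consecutive marginal set M = {π(r-k+1),...,π(r)} fails the Domino condition, then every k-element set M' ⊆ {π(r-k+1),...,π(m)} whose minimal-rank element is π(r-k+1) also fails the Domino condition. -/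
/-!
If `S` witnesses the failure of the block `{r-k+1, …, r}`, then `S ∪ M'` witnesses the failure
of `M'`: it is at least as large, and the indices it adds lie above `r`, so their p-values are
at least `p r`, which already bounds the `k`-th smallest p-value of `S` (the block supplies `k`
of them). Hence the `k`-th smallest p-value does not drop and the Domino score only grows.
-/

namespace List

variable {α : Type*} [LinearOrder α]

theorem Pairwise.getElem_le_of_mem_take {L : List α} (hL : L.Pairwise (· ≤ ·)) {i : ℕ}
    (hi : i < L.length) {a : α} (ha : a ∈ L.take (i + 1)) : a ≤ L[i] := by
  obtain ⟨j, hj, rfl⟩ := mem_iff_getElem.mp ha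
  rw [getElem_take]
  rcases (show j < i ∨ j = i by simp at hj; omega) with hlt | rfl
  · exact pairwise_iff_getElem.mp hL _ _ _ _ hlt
  · rfl

theorem Pairwise.getElem_le_of_mem_drop {L : List α} (hL : L.Pairwise (· ≤ ·)) {i : ℕ}
    (hi : i < L.length) {a : α} (ha : a ∈ L.drop i) : L[i] ≤ a := by
  obtain ⟨j, hj, rfl⟩ := mem_iff_getElem.mp ha
  rw [getElem_drop]
  rcases Nat.eq_zero_or_pos j with rfl | hpos
  · simp
  · exact pairwise_iff_getElem.mp hL _ _ _ _ (by omega)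

theorem Pairwise.getElem_le_iff_lt_countP {L : List α} (hL : L.Pairwise (· ≤ ·)) {i : ℕ}
    (hi : i < L.length) (c : α) : L[i] ≤ c ↔ i < L.countP (· ≤ c) := by
  constructor
  · intro h
    calc i < (L.take (i + 1)).length := by simp; omega
      _ = (L.take (i + 1)).countP (· ≤ c) :=
        (countP_eq_length.mpr fun a ha => by
          simpa using (hL.getElem_le_of_mem_take hi ha).trans h).symm
      _ ≤ L.countP (· ≤ c) := (take_sublist _ _).countP_le
  · intro h
    by_contra! hc
    have hdrop : (L.drop i).countP (· ≤ c) = 0 :=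
      countP_eq_zero.mpr fun a ha => by simpa using hc.trans_le (hL.getElem_le_of_mem_drop hi ha)
    have htake : (L.take i).countP (· ≤ c) ≤ i := countP_le_length.trans (by simp)
    rw [← take_append_drop i L, countP_append, hdrop] at h
    omega

end List

namespace Multiset

variable {α : Type*} [LinearOrder α]

theorem sort_getD_le_iff_lt_countP {A : Multiset α} {i : ℕ} (hi : i < card A) (c d : α) :
    (A.sort (· ≤ ·)).getD i d ≤ c ↔ i < A.countP (· ≤ c) := by
  have hlen : i < (A.sort (· ≤ ·)).length := by rwa [length_sort]
  rw [List.getD_eq_getElem _ _ hlen, (pairwise_sort A _).getElem_le_iff_lt_countP hlen]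
  conv_rhs => rw [← sort_eq A (· ≤ ·), coe_countP]

theorem sort_getD_le_of_le {C A : Multiset α} (hCA : C ≤ A) {i : ℕ} (hi : i < card C) {c : α}
    (hc : ∀ x ∈ C, x ≤ c) (d : α) : (A.sort (· ≤ ·)).getD i d ≤ c :=
  (sort_getD_le_iff_lt_countP (hi.trans_le (card_le_card hCA)) c d).mpr <|
    hi.trans_le ((countP_eq_card.mpr hc).ge.trans (countP_le_of_le _ hCA))

theorem sort_getD_le_sort_getD_add {A : Multiset α} (B : Multiset α) {i : ℕ} (hi : i < card A)
    (d : α) (hB : ∀ b ∈ B, (A.sort (· ≤ ·)).getD i d ≤ b) :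
    (A.sort (· ≤ ·)).getD i d ≤ ((A + B).sort (· ≤ ·)).getD i d := by
  set c := ((A + B).sort (· ≤ ·)).getD i d
  by_contra! hlt
  have hcB : B.countP (· ≤ c) = 0 :=
    countP_eq_zero.mpr fun b hb => not_le.mpr (hlt.trans_le (hB b hb))
  have hc := (sort_getD_le_iff_lt_countP (by simp; omega) c d).mp le_rfl
  rw [countP_add, hcB, add_zero, ← sort_getD_le_iff_lt_countP hi c d] at hc
  exact hlt.not_ge hc

end Multiset

namespace Finset

variable {ι α : Type*} [DecidableEq ι] [LinearOrder α]

theorem sort_map_getD_le_union (s t : Finset ι) (f : ι → α) {i : ℕ} (hi : i < s.card) (d : α)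
    (ht : ∀ j ∈ t, j ∉ s → ((s.val.map f).sort (· ≤ ·)).getD i d ≤ f j) :
    ((s.val.map f).sort (· ≤ ·)).getD i d ≤ (((s ∪ t).val.map f).sort (· ≤ ·)).getD i d := by
  have hval : (s ∪ t).val = s.val + (t \ s).val := by
    rw [← union_sdiff_self_eq_union, ← disjUnion_eq_union _ _ disjoint_sdiff]
    rfl
  rw [hval, Multiset.map_add]
  refine Multiset.sort_getD_le_sort_getD_add _ (by simpa using hi) d fun b hb => ?_
  obtain ⟨j, hj, rfl⟩ := Multiset.mem_map.mp hb
  exact ht j (mem_sdiff.mp hj).1 (mem_sdiff.mp hj).2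

end Finset

open Finset

theorem stmt17_general (m k r : ℕ) (p : ℕ → ℝ) (hmono : Monotone p)
    (hk : 1 ≤ k) (hkr : k ≤ r)
    (α : ℝ) (hα : 0 < α)
    (hfail : ¬ (∀ S : Finset ℕ, S ⊆ Finset.Icc 1 m → Finset.Icc (r-k+1) r ⊆ S →
      ((S.card : ℝ)/(k:ℝ)) * (((S.val.map p).sort (· ≤ ·)).getD (k-1) 0) ≤ α)) :
    ∀ M' : Finset ℕ, M' ⊆ Finset.Icc (r-k+1) m → M'.card = k →
      (r-k+1) ∈ M' → (∀ i ∈ M', r-k+1 ≤ i) →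
      ¬ (∀ S : Finset ℕ, S ⊆ Finset.Icc 1 m → M' ⊆ S →
        ((S.card : ℝ)/(k:ℝ)) * (((S.val.map p).sort (· ≤ ·)).getD (k-1) 0) ≤ α) := by
  intro M' hM' _ _ hM'ge hall
  push Not at hfail
  obtain ⟨S, hS, hblock, hviol⟩ := hfail
  have hkS : k - 1 < S.card :=
    lt_of_lt_of_le (by rw [Nat.card_Icc]; omega) (card_le_card hblock)
  have hS_le : ((S.val.map p).sort (· ≤ ·)).getD (k-1) 0 ≤ p r :=
    Multiset.sort_getD_le_of_le (Multiset.map_le_map (val_le_iff.mpr hblock))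
      (by simp; omega) (by simpa using fun _ j _ hj hx => hx ▸ hmono hj) 0
  have hS_le_union := sort_map_getD_le_union S M' p hkS 0 fun j hj hjS =>
    hS_le.trans <| hmono <| not_lt.mp fun hjr =>
      hjS <| hblock <| mem_Icc.mpr ⟨hM'ge j hj, hjr.le⟩
  have hS_pos := pos_of_mul_pos_right (hα.trans hviol) (by positivity)
  have hunion := hall (S ∪ M') (union_subset hS (hM'.trans (Icc_subset_Icc_left (by omega))))
    subset_union_right
  have hcard : (S.card : ℝ) / k ≤ (S ∪ M').card / k := by
    gcongr; exact subset_union_left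
  linarith [mul_le_mul hcard hS_le_union hS_pos.le (by positivity)]

/-- If the rank-consecutive marginal set M = {r-k+1,...,r} fails the (generalized
Bonferroni) Domino condition, then so does every k-element set M' ⊆ {r-k+1,...,m}
whose minimal-rank element is r-k+1. -/
theorem stmt17 (m k r : ℕ) (p : ℕ → ℝ) (hmono : Monotone p)
    (hk : 1 ≤ k) (hkr : k ≤ r) (hrm : r ≤ m)
    (α : ℝ) (hα : 0 < α) (hα1 : α ≤ 1)
    (hfail : ¬ (∀ S : Finset ℕ, S ⊆ Finset.Icc 1 m → Finset.Icc (r-k+1) r ⊆ S →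
      ((S.card : ℝ)/(k:ℝ)) * (((S.val.map p).sort (· ≤ ·)).getD (k-1) 0) ≤ α)) :
    ∀ M' : Finset ℕ, M' ⊆ Finset.Icc (r-k+1) m → M'.card = k →
      (r-k+1) ∈ M' → (∀ i ∈ M', r-k+1 ≤ i) →
      ¬ (∀ S : Finset ℕ, S ⊆ Finset.Icc 1 m → M' ⊆ S →
        ((S.card : ℝ)/(k:ℝ)) * (((S.val.map p).sort (· ≤ ·)).getD (k-1) 0) ≤ α) :=
  stmt17_general m k r p hmono hk hkr α hα hfail
end
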